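/- Let 𝓜 be a compact convex set of real symmetric m×m matrices such that for every M ∈ 𝓜, its positive part M₊ (from the decomposition M = M₊ − M₋ with M₊, M₋ positive semidefinite and ⟨M₊, M₋⟩ = 0) also belongs to 𝓜. Then: (i) Ω_𝓜(X) = sup_{M ∈ 𝓜} trace(X M Xᵀ) is convex on ℝ^{n×m}; and (ii) for every positive semidefinite G, if P ∈ 𝓜 satisfies ⟨G − P, Q − P⟩ ≤ 0 for all Q ∈ 𝓜 (i.e., P is the projection of G onto 𝓜), then P is positive semidefinite. -/

import Mathlib

/-!
Replacing `M ∈ 𝓜` by its positive part `M⁺ ∈ 𝓜` can only increase `tr(X M Xᵀ)`, so `Ω_𝓜` is the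
supremum of the convex quadratics `X ↦ tr(X M⁺ Xᵀ)`. For the projection `P` of a positive
semidefinite `G`, testing the variational inequality at `Q = P⁺` gives
`⟨G, P⁻⟩ + ‖P⁻‖² ≤ 0`, and both terms are nonnegative, so `P⁻ = 0`.
-/

open Matrix

theorem le_biSup_of_isCompact {α : Type*} [TopologicalSpace α] {s : Set α} {f : α → ℝ}
    (hs : IsCompact s) (hf : ContinuousOn f s) {i : α} (hi : i ∈ s) :
    f i ≤ ⨆ j ∈ s, f j := by
  refine le_ciSup₂ (f := fun j (_ : j ∈ s) => f j) ?_ i hi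
  convert (hs.image_of_continuousOn hf).bddAbove using 1
  ext; simp

namespace Matrix

open scoped MatrixOrder

variable {n m : Type*} [Fintype n] [Fintype m]

theorem PosSemidef.trace_mul_mul_transpose_nonneg {M : Matrix m m ℝ} (hM : M.PosSemidef)
    (X : Matrix n m ℝ) : 0 ≤ (X * M * Xᵀ).trace := by
  simpa using (hM.mul_mul_conjTranspose_same X).trace_nonneg

theorem PosSemidef.convexOn_trace_mul_mul_transpose {M : Matrix m m ℝ} (hM : M.PosSemidef) :
    ConvexOn ℝ Set.univ fun X : Matrix n m ℝ => (X * M * Xᵀ).trace := by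
  refine ⟨convex_univ, fun X _ Y _ a b ha hb hab => ?_⟩
  have hcross : (Y * M * Xᵀ).trace = (X * M * Yᵀ).trace := by
    rw [← trace_transpose, transpose_mul, transpose_mul, transpose_transpose,
      (isHermitian_iff_isSymm.mp hM.isHermitian).eq, Matrix.mul_assoc]
  have hdiff := hM.trace_mul_mul_transpose_nonneg (X - Y)
  simp only [transpose_sub, transpose_add, transpose_smul, Matrix.sub_mul, Matrix.mul_sub,
    Matrix.add_mul, Matrix.mul_add, Matrix.smul_mul, Matrix.mul_smul, trace_sub, trace_add,
    trace_smul, smul_eq_mul, hcross] at hdiff ⊢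
  -- `a q(X) + b q(Y) - q(aX + bY) = a b q(X - Y)` once `a + b = 1`
  linear_combination (a * b) * hdiff + (a * (X * M * Xᵀ).trace + b * (Y * M * Yᵀ).trace) * hab

variable [DecidableEq m]

theorem PosSemidef.trace_mul_nonneg {A B : Matrix m m ℝ} (hA : A.PosSemidef)
    (hB : B.PosSemidef) : 0 ≤ (A * B).trace := by
  obtain ⟨C, rfl⟩ := CStarAlgebra.nonneg_iff_eq_star_mul_self.mp hB.nonneg
  rw [star_eq_conjTranspose, ← Matrix.mul_assoc, trace_mul_comm]
  simpa [Matrix.mul_assoc] using (hA.mul_mul_conjTranspose_same C).trace_nonneg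

theorem posSemidef_posPart (M : Matrix m m ℝ) : (M⁺).PosSemidef :=
  nonneg_iff_posSemidef.mp (CFC.posPart_nonneg M)

theorem posSemidef_negPart (M : Matrix m m ℝ) : (M⁻).PosSemidef :=
  nonneg_iff_posSemidef.mp (CFC.negPart_nonneg M)

theorem trace_transpose_posPart_mul_negPart (M : Matrix m m ℝ) : ((M⁺)ᵀ * M⁻).trace = 0 := by
  rw [← conjTranspose_eq_transpose_of_trivial, (posSemidef_posPart M).isHermitian.eq,
    CFC.posPart_mul_negPart, trace_zero]

theorem IsHermitian.trace_mul_mul_transpose_le_posPart {M : Matrix m m ℝ} (hM : M.IsHermitian)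
    (X : Matrix n m ℝ) : (X * M * Xᵀ).trace ≤ (X * M⁺ * Xᵀ).trace := by
  conv_lhs => rw [← CFC.posPart_sub_negPart M hM, Matrix.mul_sub, Matrix.sub_mul, trace_sub]
  linarith [(posSemidef_negPart M).trace_mul_mul_transpose_nonneg X]

theorem eq_zero_of_trace_sub_mul_nonpos {G Pp Pm : Matrix m m ℝ} (hG : G.PosSemidef)
    (hPm : Pm.PosSemidef) (horth : (Ppᵀ * Pm).trace = 0)
    (h : ((G - (Pp - Pm))ᵀ * Pm).trace ≤ 0) : Pm = 0 := by
  have hGt : Gᵀ = G := (isHermitian_iff_isSymm.mp hG.isHermitian).eq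
  simp only [transpose_sub, hGt, Matrix.sub_mul, trace_sub, horth] at h
  have hsq : (Pmᵀ * Pm).trace = 0 := le_antisymm
    (by linarith [hG.trace_mul_nonneg hPm])
    (by simpa using (posSemidef_conjTranspose_mul_self Pm).trace_nonneg)
  rwa [← conjTranspose_eq_transpose_of_trivial, trace_conjTranspose_mul_self_eq_zero_iff] at hsq

theorem IsHermitian.posSemidef_of_trace_mul_posPart_sub_nonpos {G P : Matrix m m ℝ}
    (hG : G.PosSemidef) (hP : P.IsHermitian) (h : ((G - P)ᵀ * (P⁺ - P)).trace ≤ 0) :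
    P.PosSemidef := by
  have hdecomp : P⁺ - P⁻ = P := CFC.posPart_sub_negPart P hP
  have hneg : P⁺ - P = P⁻ := by nth_rw 2 [← hdecomp]; abel
  have hzero : P⁻ = 0 := eq_zero_of_trace_sub_mul_nonpos hG (posSemidef_negPart P)
    (trace_transpose_posPart_mul_negPart P) (by rwa [hdecomp, ← hneg])
  rw [← hdecomp, hzero, sub_zero]
  exact posSemidef_posPart P

end Matrix

theorem vgf_convex_and_proj_psd_general {n m : ℕ}
    (𝓜 : Set (Matrix (Fin m) (Fin m) ℝ))
    (hcpt : IsCompact 𝓜) (hsym : ∀ M ∈ 𝓜, M.IsSymm)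
    (hplus : ∀ M ∈ 𝓜, ∀ Mp Mm : Matrix (Fin m) (Fin m) ℝ,
      Mp.PosSemidef → Mm.PosSemidef → M = Mp - Mm → (Mpᵀ * Mm).trace = 0 →
      Mp ∈ 𝓜) :
    ConvexOn ℝ Set.univ
      (fun X : Matrix (Fin n) (Fin m) ℝ => ⨆ M ∈ 𝓜, (X * M * Xᵀ).trace) ∧
    ∀ G : Matrix (Fin m) (Fin m) ℝ, G.PosSemidef →
      ∀ P ∈ 𝓜, (∀ Q ∈ 𝓜, ((G - P)ᵀ * (Q - P)).trace ≤ 0) → P.PosSemidef := by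
  open scoped MatrixOrder in
  have hherm : ∀ M ∈ 𝓜, M.IsHermitian := fun M hM => isHermitian_iff_isSymm.mpr (hsym M hM)
  have hpos : ∀ M ∈ 𝓜, M⁺ ∈ 𝓜 := fun M hM =>
    hplus M hM _ _ (posSemidef_posPart M) (posSemidef_negPart M)
      (CFC.posPart_sub_negPart M (hherm M hM)).symm (trace_transpose_posPart_mul_negPart M)
  have hle : ∀ X : Matrix (Fin n) (Fin m) ℝ, ∀ M ∈ 𝓜,
      (X * M * Xᵀ).trace ≤ ⨆ M ∈ 𝓜, (X * M * Xᵀ).trace :=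
    fun X M hM => le_biSup_of_isCompact (f := fun M => (X * M * Xᵀ).trace) hcpt (by fun_prop) hM
  -- each `M ∉ 𝓜` contributes the junk value `⨆ _ : False, _ = 0` to the supremum
  have hnonneg : ∀ X : Matrix (Fin n) (Fin m) ℝ, 0 ≤ ⨆ M ∈ 𝓜, (X * M * Xᵀ).trace := by
    intro X
    rcases 𝓜.eq_empty_or_nonempty with rfl | ⟨M, hM⟩
    · simp
    · exact ((posSemidef_posPart M).trace_mul_mul_transpose_nonneg X).trans (hle X _ (hpos M hM))
  refine ⟨⟨convex_univ, fun X _ Y _ a b ha hb hab => ?_⟩, fun G hG P hP hproj => ?_⟩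
  · simp only [smul_eq_mul]
    have hrhs := add_nonneg (mul_nonneg ha (hnonneg X)) (mul_nonneg hb (hnonneg Y))
    refine Real.iSup_le (fun M => Real.iSup_le (fun hM => ?_) hrhs) hrhs
    calc ((a • X + b • Y) * M * (a • X + b • Y)ᵀ).trace
        ≤ ((a • X + b • Y) * M⁺ * (a • X + b • Y)ᵀ).trace :=
          (hherm M hM).trace_mul_mul_transpose_le_posPart _
      _ ≤ a * (X * M⁺ * Xᵀ).trace + b * (Y * M⁺ * Yᵀ).trace :=
          (posSemidef_posPart M).convexOn_trace_mul_mul_transpose.2 trivial trivial ha hb hab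
      _ ≤ a * (⨆ M ∈ 𝓜, (X * M * Xᵀ).trace) + b * ⨆ M ∈ 𝓜, (Y * M * Yᵀ).trace := by
          gcongr <;> exact hle _ _ (hpos M hM)
  · exact (hherm P hP).posSemidef_of_trace_mul_posPart_sub_nonpos hG (hproj _ (hpos P hP))

/-- If a compact convex set `𝓜` of symmetric matrices contains the positive part of
each of its elements, then (i) the VGF `Ω_𝓜` is convex, and (ii) the projection onto
`𝓜` of any positive semidefinite matrix is positive semidefinite. -/
theorem vgf_convex_and_proj_psd {n m : ℕ}
    (𝓜 : Set (Matrix (Fin m) (Fin m) ℝ))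
    (hcpt : IsCompact 𝓜) (hconvS : Convex ℝ 𝓜) (hsym : ∀ M ∈ 𝓜, M.IsSymm)
    (hplus : ∀ M ∈ 𝓜, ∀ Mp Mm : Matrix (Fin m) (Fin m) ℝ,
      Mp.PosSemidef → Mm.PosSemidef → M = Mp - Mm → (Mpᵀ * Mm).trace = 0 →
      Mp ∈ 𝓜) :
    ConvexOn ℝ Set.univ
      (fun X : Matrix (Fin n) (Fin m) ℝ => ⨆ M ∈ 𝓜, (X * M * Xᵀ).trace) ∧
    ∀ G : Matrix (Fin m) (Fin m) ℝ, G.PosSemidef →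
      ∀ P ∈ 𝓜, (∀ Q ∈ 𝓜, ((G - P)ᵀ * (Q - P)).trace ≤ 0) → P.PosSemidef :=
  vgf_convex_and_proj_psd_general 𝓜 hcpt hsym hplus
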